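/- The signature of a symmetric nondegenerate bilinear form on a real vector space that is Hermitian with respect to a hypercomplex structure is of the form (4p, 4q): both the dimension of a maximal positive-definite subspace and of a maximal negative-definite subspace are divisible by 4. -/

import Mathlib

/-!
Let `Q` be maximal among the `I, J, K`-invariant positive-definite subspaces of dimension
divisible by `4`. No vector `y` orthogonal to `Q` has `0 < h y y`: otherwise `Q` could be enlarged
by the quaternionic line spanned by `y, I y, J y, K y`, which is invariant, orthogonal to `Q`,
positive definite and four-dimensional, because `I`, `J`, `K` are `h`-skew and anticommute.
A positive-definite subspace meets a subspace without positive vectors only in `0`, and by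
maximality `W^⊥` has no positive vectors when `W` is maximal positive definite; comparing `W` with
`Q^⊥` and `Q` with `W^⊥` gives `dim W = dim Q`. The negative-definite case is the positive one
for `-h`.
-/

open LinearMap (BilinForm)
open Module Submodule

theorem quaternion_relations {A : Type*} [Ring A] {I J K : A} (hI : I * I = -1)
    (hJ : J * J = -1) (hK : K * K = -1) (hIJK : I * J * K = -1) :
    I * J = K ∧ J * K = I ∧ K * I = J ∧ J * I = -K ∧ K * J = -I ∧ I * K = -J := by
  have hIJ : I * J = K := by
    simpa [mul_assoc, hK] using congrArg (· * K) hIJK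
  have hJK : J * K = I := by
    simpa [← mul_assoc, hI] using congrArg (I * ·) hIJK
  have hJI : J * I = -K := by simpa [← mul_assoc, hJ] using (congrArg (J * ·) hJK).symm
  have hIK : I * K = -J := by simpa [← mul_assoc, hI] using (congrArg (I * ·) hIJ).symm
  refine ⟨hIJ, hJK, ?_, hJI, ?_, hIK⟩
  · rw [← hIJ, mul_assoc, hJI, mul_neg, hIK, neg_neg]
  · rw [← hIJ, mul_assoc, hJ, mul_neg_one]

structure IsHypercomplex {R M : Type*} [Ring R] [AddCommGroup M] [Module R M]
    (I J K : Module.End R M) : Prop where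
  I_mul_I : I * I = -1
  J_mul_J : J * J = -1
  K_mul_K : K * K = -1
  I_mul_J_mul_K : I * J * K = -1

theorem IsHypercomplex.apply_apply {R M : Type*} [Ring R] [AddCommGroup M] [Module R M]
    {I J K : Module.End R M} (hq : IsHypercomplex I J K) (x : M) :
    I (I x) = -x ∧ J (J x) = -x ∧ K (K x) = -x ∧ I (J x) = K x ∧ J (K x) = I x ∧
      K (I x) = J x ∧ J (I x) = -K x ∧ K (J x) = -I x ∧ I (K x) = -J x := by
  obtain ⟨hIJ, hJK, hKI, hJI, hKJ, hIK⟩ :=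
    quaternion_relations hq.I_mul_I hq.J_mul_J hq.K_mul_K hq.I_mul_J_mul_K
  simp only [← Module.End.mul_apply, hq.I_mul_I, hq.J_mul_J, hq.K_mul_K, hIJ, hJK, hKI, hJI,
    hKJ, hIK, LinearMap.neg_apply, Module.End.one_apply, and_self]

namespace LinearMap.BilinForm

variable {V : Type*} [AddCommGroup V] [Module ℝ V] {h : BilinForm ℝ V}

def PosDefOn (h : BilinForm ℝ V) (W : Submodule ℝ V) : Prop :=
  ∀ x ∈ W, x ≠ 0 → 0 < h x x

namespace PosDefOn

variable {W Q : Submodule ℝ V}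

theorem nonneg (hW : h.PosDefOn W) {x : V} (hx : x ∈ W) : 0 ≤ h x x := by
  rcases eq_or_ne x 0 with rfl | hx0
  · simp
  · exact (hW x hx hx0).le

theorem disjoint_orthogonal (hW : h.PosDefOn W) : Disjoint W (h.orthogonal W) := by
  refine disjoint_def.2 fun x hx hxo => by_contra fun hx0 => ?_
  exact (hW x hx hx0).ne' (hxo x hx)

theorem sup (hs : h.IsSymm) (hW : h.PosDefOn W) (hQ : h.PosDefOn Q)
    (hWQ : Q ≤ h.orthogonal W) : h.PosDefOn (W ⊔ Q) := by
  intro v hv hv0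
  obtain ⟨w, hw, q, hq, rfl⟩ := mem_sup.1 hv
  have hwq : h w q = 0 := hWQ hq w hw
  have hqw : h q w = 0 := by rw [hs.eq, hwq]
  have hsplit : h (w + q) (w + q) = h w w + h q q := by
    rw [add_left, add_right, add_right, hwq, hqw, add_zero, zero_add]
  rw [hsplit]
  rcases eq_or_ne w 0 with rfl | hw0
  · simpa using hQ q hq (by simpa using hv0)
  · linarith [hW w hw hw0, hQ.nonneg hq]

theorem finrank_add_le [FiniteDimensional ℝ V] (hW : h.PosDefOn W) {S : Submodule ℝ V}
    (hS : ∀ x ∈ S, h x x ≤ 0) : finrank ℝ W + finrank ℝ S ≤ finrank ℝ V := by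
  refine Submodule.finrank_add_finrank_le_of_disjoint (disjoint_def.2 fun x hxW hxS => ?_)
  by_contra hx0
  exact (hW x hxW hx0).not_ge (hS x hxS)

theorem finrank_le [FiniteDimensional ℝ V] (hs : h.IsSymm) (hW : h.PosDefOn W)
    (hQ : ∀ y ∈ h.orthogonal Q, h y y ≤ 0) : finrank ℝ W ≤ finrank ℝ Q := by
  have := hW.finrank_add_le hQ
  have := finrank_add_finrank_orthogonal hs.isRefl Q
  omega

end PosDefOn

theorem posDefOn_span_singleton {y : V} (hy : 0 < h y y) : h.PosDefOn (ℝ ∙ y) := by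
  intro v hv hv0
  obtain ⟨t, rfl⟩ := mem_span_singleton.1 hv
  have ht : t ≠ 0 := by rintro rfl; simp at hv0
  simpa [mul_assoc] using mul_pos (mul_self_pos.2 ht) hy

theorem PosDefOn.nonpos_of_mem_orthogonal {W : Submodule ℝ V} (hs : h.IsSymm)
    (hW : h.PosDefOn W) (hmax : ∀ W', h.PosDefOn W' → W ≤ W' → W' = W)
    {y : V} (hy : y ∈ h.orthogonal W) : h y y ≤ 0 := by
  by_contra! hpos
  have hWy : W ⊔ (ℝ ∙ y) = W :=
    hmax _ (hW.sup hs (posDefOn_span_singleton hpos) ((span_singleton_le_iff_mem _ _).2 hy))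
      le_sup_left
  have hyW : y ∈ W := hWy ▸ mem_sup_right (mem_span_singleton_self y)
  exact hpos.ne' (hy y hyW)

theorem posDefOn_span_range_of_iIsOrtho {ι : Type*} [Fintype ι] {e : ι → V}
    (he : h.iIsOrtho e) (hpos : ∀ i, 0 < h (e i) (e i)) :
    h.PosDefOn (span ℝ (Set.range e)) := by
  classical
  intro v hv hv0
  obtain ⟨c, rfl⟩ := (mem_span_range_iff_exists_fun ℝ).1 hv
  have hdiag : h (∑ i, c i • e i) (∑ i, c i • e i) = ∑ i, c i * c i * h (e i) (e i) := by
    simp only [sum_left, sum_right, smul_left, smul_right]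
    refine Finset.sum_congr rfl fun i _ => ?_
    rw [Finset.sum_eq_single i (fun j _ hji => by rw [he hji, mul_zero]) (by simp)]
    ring
  obtain ⟨i, hi⟩ : ∃ i, c i ≠ 0 := by
    by_contra! hc
    simp [hc] at hv0
  rw [hdiag]
  exact Finset.sum_pos' (fun j _ => mul_nonneg (mul_self_nonneg _) (hpos j).le)
    ⟨i, Finset.mem_univ _, mul_pos (mul_self_pos.2 hi) (hpos i)⟩

theorem apply_left_eq_neg_apply_right {A : Module.End ℝ V} (hA : A * A = -1)
    (hhA : h.IsOrthogonal A) (x y : V) : h (A x) y = -h x (A y) := by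
  rw [← hhA (A x) y, ← Module.End.mul_apply, hA]
  simp

theorem apply_self_apply_eq_zero (hs : h.IsSymm) {A : Module.End ℝ V} (hA : A * A = -1)
    (hhA : h.IsOrthogonal A) (x : V) : h x (A x) = 0 := by
  have := apply_left_eq_neg_apply_right hA hhA x x
  rw [hs.eq] at this
  linarith

theorem orthogonal_mem_invtSubmodule {A : Module.End ℝ V} (hA : A * A = -1)
    (hhA : h.IsOrthogonal A) {Q : Submodule ℝ V} (hQ : Q ∈ A.invtSubmodule) :
    h.orthogonal Q ∈ A.invtSubmodule := by
  intro y hy u hu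
  have := apply_left_eq_neg_apply_right hA hhA u y
  rw [hy (A u) (hQ hu)] at this
  exact neg_eq_zero.1 this.symm

end LinearMap.BilinForm

open LinearMap.BilinForm

section Quaternionic

variable {V : Type*} [AddCommGroup V] [Module ℝ V]

def quatFrame (I J K : Module.End ℝ V) (x : V) : Fin 4 → V := ![x, I x, J x, K x]

def quatLine (I J K : Module.End ℝ V) (x : V) : Submodule ℝ V :=
  span ℝ (Set.range (quatFrame I J K x))

variable {h : BilinForm ℝ V} {I J K : Module.End ℝ V}

theorem quatLine_le {S : Submodule ℝ V} (hI : S ∈ I.invtSubmodule) (hJ : S ∈ J.invtSubmodule)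
    (hK : S ∈ K.invtSubmodule) {x : V} (hx : x ∈ S) : quatLine I J K x ≤ S := by
  refine span_le.2 (Set.range_subset_iff.2 fun i => ?_)
  fin_cases i
  exacts [hx, hI hx, hJ hx, hK hx]

theorem quatLine_mem_invtSubmodule (hq : IsHypercomplex I J K) (x : V) :
    quatLine I J K x ∈ I.invtSubmodule ⊓ J.invtSubmodule ⊓ K.invtSubmodule := by
  have h0 : x ∈ quatLine I J K x := subset_span ⟨0, rfl⟩
  have h1 : I x ∈ quatLine I J K x := subset_span ⟨1, rfl⟩
  have h2 : J x ∈ quatLine I J K x := subset_span ⟨2, rfl⟩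
  have h3 : K x ∈ quatLine I J K x := subset_span ⟨3, rfl⟩
  obtain ⟨hII, hJJ, hKK, hIJ, hJK, hKI, hJI, hKJ, hIK⟩ := hq.apply_apply x
  refine ⟨⟨?_, ?_⟩, ?_⟩ <;> refine span_le.2 (Set.range_subset_iff.2 fun i => ?_) <;>
    fin_cases i <;> simp [quatFrame, *]

theorem iIsOrtho_quatFrame (hs : h.IsSymm) (hq : IsHypercomplex I J K) (hhI : h.IsOrthogonal I)
    (hhJ : h.IsOrthogonal J) (hhK : h.IsOrthogonal K) (x : V) :
    h.iIsOrtho (quatFrame I J K x) := by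
  obtain ⟨hII, hJJ, hKK, hIJ, hJK, hKI, hJI, hKJ, hIK⟩ := hq.apply_apply x
  have sI := apply_left_eq_neg_apply_right hq.I_mul_I hhI
  have sJ := apply_left_eq_neg_apply_right hq.J_mul_J hhJ
  have sK := apply_left_eq_neg_apply_right hq.K_mul_K hhK
  have oI := apply_self_apply_eq_zero hs hq.I_mul_I hhI x
  have oJ := apply_self_apply_eq_zero hs hq.J_mul_J hhJ x
  have oK := apply_self_apply_eq_zero hs hq.K_mul_K hhK x
  intro i j hij
  fin_cases i <;> fin_cases j <;>
    simp_all [Function.onFun, quatFrame]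

theorem apply_quatFrame_self (hhI : h.IsOrthogonal I) (hhJ : h.IsOrthogonal J)
    (hhK : h.IsOrthogonal K) (x : V) (i : Fin 4) :
    h (quatFrame I J K x i) (quatFrame I J K x i) = h x x := by
  fin_cases i
  exacts [rfl, hhI x x, hhJ x x, hhK x x]

theorem finrank_quatLine (hs : h.IsSymm) (hq : IsHypercomplex I J K) (hhI : h.IsOrthogonal I)
    (hhJ : h.IsOrthogonal J) (hhK : h.IsOrthogonal K) {x : V} (hx : h x x ≠ 0) :
    finrank ℝ (quatLine I J K x) = 4 := by
  have hli := linearIndependent_of_iIsOrtho (iIsOrtho_quatFrame hs hq hhI hhJ hhK x)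
    (fun i => by rwa [apply_quatFrame_self hhI hhJ hhK])
  rw [quatLine, finrank_span_eq_card hli, Fintype.card_fin]

theorem posDefOn_quatLine (hs : h.IsSymm) (hq : IsHypercomplex I J K) (hhI : h.IsOrthogonal I)
    (hhJ : h.IsOrthogonal J) (hhK : h.IsOrthogonal K) {x : V} (hx : 0 < h x x) :
    h.PosDefOn (quatLine I J K x) :=
  posDefOn_span_range_of_iIsOrtho (iIsOrtho_quatFrame hs hq hhI hhJ hhK x)
    (fun i => by rwa [apply_quatFrame_self hhI hhJ hhK])

-- `4 ∣ finrank ℝ Q` follows from invariance; carrying it along avoids making `V` a module over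
-- the quaternions.
def IsQuatPosDef (h : BilinForm ℝ V) (I J K : Module.End ℝ V) (Q : Submodule ℝ V) : Prop :=
  Q ∈ I.invtSubmodule ⊓ J.invtSubmodule ⊓ K.invtSubmodule ∧ h.PosDefOn Q ∧ 4 ∣ finrank ℝ Q

theorem IsQuatPosDef.sup_quatLine [FiniteDimensional ℝ V] (hs : h.IsSymm)
    (hq : IsHypercomplex I J K) (hhI : h.IsOrthogonal I) (hhJ : h.IsOrthogonal J)
    (hhK : h.IsOrthogonal K) {Q : Submodule ℝ V} (hQ : IsQuatPosDef h I J K Q) {y : V}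
    (hy : y ∈ h.orthogonal Q) (hyy : 0 < h y y) :
    IsQuatPosDef h I J K (Q ⊔ quatLine I J K y) := by
  obtain ⟨hQinv, hQpos, hQ4⟩ := hQ
  have hL : quatLine I J K y ≤ h.orthogonal Q :=
    quatLine_le (orthogonal_mem_invtSubmodule hq.I_mul_I hhI hQinv.1.1)
      (orthogonal_mem_invtSubmodule hq.J_mul_J hhJ hQinv.1.2)
      (orthogonal_mem_invtSubmodule hq.K_mul_K hhK hQinv.2) hy
  refine ⟨Sublattice.sup_mem hQinv (quatLine_mem_invtSubmodule hq y),
    hQpos.sup hs (posDefOn_quatLine hs hq hhI hhJ hhK hyy) hL, ?_⟩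
  have hrank := Submodule.finrank_sup_add_finrank_inf_eq Q (quatLine I J K y)
  rw [(hQpos.disjoint_orthogonal.mono_right hL).eq_bot, finrank_bot,
    finrank_quatLine hs hq hhI hhJ hhK hyy.ne'] at hrank
  omega

theorem exists_posDefOn_four_dvd_orthogonal_nonpos [FiniteDimensional ℝ V] (hs : h.IsSymm)
    (hq : IsHypercomplex I J K) (hhI : h.IsOrthogonal I) (hhJ : h.IsOrthogonal J)
    (hhK : h.IsOrthogonal K) :
    ∃ Q : Submodule ℝ V, h.PosDefOn Q ∧ 4 ∣ finrank ℝ Q ∧ ∀ y ∈ h.orthogonal Q, h y y ≤ 0 := by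
  obtain ⟨Q, hQ, hmax⟩ := wellFounded_gt.has_min {Q | IsQuatPosDef h I J K Q}
    ⟨⊥, by simp [IsQuatPosDef, PosDefOn]⟩
  refine ⟨Q, hQ.2.1, hQ.2.2, fun y hy => not_lt.1 fun hyy => ?_⟩
  have hQL := hmax _ (hQ.sup_quatLine hs hq hhI hhJ hhK hy hyy)
  have hyQ : y ∈ Q := by
    by_contra hyQ
    refine hQL (lt_of_le_of_ne le_sup_left fun hQL' => hyQ ?_)
    exact hQL' ▸ mem_sup_right (subset_span ⟨0, rfl⟩)
  exact hyy.ne' (hy y hyQ)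

theorem four_dvd_finrank_of_maximal_posDefOn [FiniteDimensional ℝ V] (hs : h.IsSymm)
    (hq : IsHypercomplex I J K) (hhI : h.IsOrthogonal I) (hhJ : h.IsOrthogonal J)
    (hhK : h.IsOrthogonal K) {W : Submodule ℝ V} (hW : h.PosDefOn W)
    (hmax : ∀ W', h.PosDefOn W' → W ≤ W' → W' = W) : 4 ∣ finrank ℝ W := by
  obtain ⟨Q, hQ, hQ4, hQperp⟩ := exists_posDefOn_four_dvd_orthogonal_nonpos hs hq hhI hhJ hhK
  have hWQ : finrank ℝ W = finrank ℝ Q :=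
    (hW.finrank_le hs hQperp).antisymm
      (hQ.finrank_le hs fun y hy => hW.nonpos_of_mem_orthogonal hs hmax hy)
  exact hWQ ▸ hQ4

end Quaternionic

theorem stmt5_general {V : Type*} [AddCommGroup V] [Module ℝ V] [FiniteDimensional ℝ V]
    (h : LinearMap.BilinForm ℝ V)
    (hsym : ∀ x y, h x y = h y x)
    (I J K : Module.End ℝ V)
    (hI : I * I = -1) (hJ : J * J = -1) (hK : K * K = -1)
    (hIJK : I * J * K = -1)
    (hhI : ∀ x y, h (I x) (I y) = h x y)
    (hhJ : ∀ x y, h (J x) (J y) = h x y)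
    (hhK : ∀ x y, h (K x) (K y) = h x y) :
    (∀ W : Submodule ℝ V,
      (∀ x ∈ W, x ≠ 0 → 0 < h x x) →
      (∀ W' : Submodule ℝ V, (∀ x ∈ W', x ≠ 0 → 0 < h x x) → W ≤ W' → W' = W) →
      4 ∣ Module.finrank ℝ W) ∧
    (∀ W : Submodule ℝ V,
      (∀ x ∈ W, x ≠ 0 → h x x < 0) →
      (∀ W' : Submodule ℝ V, (∀ x ∈ W', x ≠ 0 → h x x < 0) → W ≤ W' → W' = W) →
      4 ∣ Module.finrank ℝ W) := by
  have hs : h.IsSymm := isSymm_def.2 hsym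
  have hq : IsHypercomplex I J K := ⟨hI, hJ, hK, hIJK⟩
  have hneg : ∀ {A : Module.End ℝ V}, h.IsOrthogonal A → (-h).IsOrthogonal A := fun hA x y => by
    simp [hA x y]
  refine ⟨fun W hW hmax => four_dvd_finrank_of_maximal_posDefOn hs hq hhI hhJ hhK hW hmax,
    fun W hW hmax => ?_⟩
  refine four_dvd_finrank_of_maximal_posDefOn hs.neg hq (hneg hhI) (hneg hhJ) (hneg hhK)
    (by simpa [PosDefOn] using hW) ?_
  simpa [PosDefOn] using hmax

/-- The signature of a hypercomplex-Hermitian nondegenerate symmetric form is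
of the form `(4p, 4q)`: every maximal positive-definite subspace and every
maximal negative-definite subspace has dimension divisible by `4`. -/
theorem stmt5 {V : Type*} [AddCommGroup V] [Module ℝ V] [FiniteDimensional ℝ V]
    (h : LinearMap.BilinForm ℝ V)
    (hsym : ∀ x y, h x y = h y x)
    (hnd : h.Nondegenerate)
    (I J K : Module.End ℝ V)
    (hI : I * I = -1) (hJ : J * J = -1) (hK : K * K = -1)
    (hIJK : I * J * K = -1)
    (hhI : ∀ x y, h (I x) (I y) = h x y)
    (hhJ : ∀ x y, h (J x) (J y) = h x y)
    (hhK : ∀ x y, h (K x) (K y) = h x y) :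
    (∀ W : Submodule ℝ V,
      (∀ x ∈ W, x ≠ 0 → 0 < h x x) →
      (∀ W' : Submodule ℝ V, (∀ x ∈ W', x ≠ 0 → 0 < h x x) → W ≤ W' → W' = W) →
      4 ∣ Module.finrank ℝ W) ∧
    (∀ W : Submodule ℝ V,
      (∀ x ∈ W, x ≠ 0 → h x x < 0) →
      (∀ W' : Submodule ℝ V, (∀ x ∈ W', x ≠ 0 → h x x < 0) → W ≤ W' → W' = W) →
      4 ∣ Module.finrank ℝ W) :=
  stmt5_general h hsym I J K hI hJ hK hIJK hhI hhJ hhK
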